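/- Let d ≥ q ≥ 2 be integers and set B_c = (d+1−q)/(d+1). Define, for real β ≥ 1, h(β) = [1 − (1−B_c)·(β−1)/((q−1)·β + B_c)]^d · [(q−1)·(β^{1/d} − 1) + 1 − B_c] + B_c·β^{1/d}, where β^{1/d} is the real d-th root of β. Then h is strictly increasing on the interval [1, ∞). -/

import Mathlib

/-!
Substituting `β = x ^ d` makes `h` a rational function of `x ≥ 1`. Writing `N = (q - 2 + B) β + 1`,
`D = (q - 1) β + B`, `C = (q - 1)(x - 1) + 1 - B` and `s = q - 1 + B`, its first factor is
`(N / D) ^ d` and the numerator of its derivative is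
`((q - 1) N ^ d + B D ^ d) D - d s² x ^ (d - 1) N ^ (d - 1) C`.
At `B = B_c` one has `d (1 - B) = s`, and the numerator is positive by three convexity estimates:
Bernoulli gives `d C ≤ D`, the tangent of `t ↦ t ^ d` at `x` gives `s x ^ (d - 1) < N + B (β - 1)`,
and the tangent at `N` gives `N ^ d + d N ^ (d - 1) (D - N) ≤ D ^ d`.
-/

open Real Set

lemma pow_pred_mul_lt_of_one_lt {x : ℝ} (hx : 1 < x) {n : ℕ} (hn : 2 ≤ n) :
    n * x ^ (n - 1) < (n - 1) * x ^ n + 1 := by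
  have hx0 : 0 < x := by linarith
  -- strict Bernoulli at `1 / x`, multiplied by `x ^ n`
  have hbern := one_add_mul_self_lt_rpow_one_add (s := x⁻¹ - 1)
    (by linarith [inv_pos.2 hx0]) (sub_ne_zero.2 (inv_ne_one.2 hx.ne')) (p := n)
    (by exact_mod_cast hn)
  rw [add_sub_cancel, rpow_natCast, inv_pow] at hbern
  have h := mul_lt_mul_of_pos_right hbern (pow_pos hx0 n)
  rw [inv_mul_cancel₀ (pow_ne_zero n hx0.ne')] at h
  obtain ⟨m, rfl⟩ : ∃ m, n = m + 1 := ⟨n - 1, by omega⟩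
  rw [Nat.add_sub_cancel, pow_succ]
  rw [pow_succ] at h
  push_cast at h ⊢
  linear_combination h - (m + 1) * x ^ m * inv_mul_cancel₀ hx0.ne'

/-- `pottsHOfRoot d q B x = h (x ^ d)`, where `h` is built with `B` in place of `B_c`. -/
noncomputable def pottsHOfRoot (d : ℕ) (q B x : ℝ) : ℝ :=
  (1 - (1 - B) * (x ^ d - 1) / ((q - 1) * x ^ d + B)) ^ d * ((q - 1) * (x - 1) + 1 - B) + B * x

lemma hasDerivAt_pottsHOfRoot {d : ℕ} {q B x : ℝ} (hqB : ((d : ℝ) + 1) * (1 - B) = q)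
    (hD : (q - 1) * x ^ d + B ≠ 0) :
    HasDerivAt (pottsHOfRoot d q B)
      ((((q - 1) * ((q - 2 + B) * x ^ d + 1) ^ d + B * ((q - 1) * x ^ d + B) ^ d)
          * ((q - 1) * x ^ d + B)
        - d * (q - 1 + B) ^ 2 * x ^ (d - 1) * ((q - 2 + B) * x ^ d + 1) ^ (d - 1)
          * ((q - 1) * (x - 1) + 1 - B)) / ((q - 1) * x ^ d + B) ^ (d + 1)) x := by
  have hpow := hasDerivAt_pow d x
  have hA : HasDerivAt (fun y => 1 - (1 - B) * (y ^ d - 1) / ((q - 1) * y ^ d + B))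
      (-((1 - B) * (q - 1 + B) * (d * x ^ (d - 1))) / ((q - 1) * x ^ d + B) ^ 2) x := by
    refine (((hpow.sub_const 1).const_mul (1 - B)).fun_div
      ((hpow.const_mul (q - 1)).add_const B) hD).const_sub 1 |>.congr_deriv ?_
    ring
  have hC := ((((hasDerivAt_id' x).sub_const 1).const_mul (q - 1)).add_const 1).sub_const B
  refine ((hA.fun_pow d).fun_mul hC).fun_add ((hasDerivAt_id' x).const_mul B)
    |>.congr_deriv (f := pottsHOfRoot d q B) ?_
  have hA_eq : 1 - (1 - B) * (x ^ d - 1) / ((q - 1) * x ^ d + B)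
      = ((q - 2 + B) * x ^ d + 1) / ((q - 1) * x ^ d + B) := by
    rw [eq_div_iff hD, sub_mul, div_mul_cancel₀ _ hD]; ring
  rw [hA_eq]
  rcases d with _ | n
  · simp only [pow_zero, mul_one] at hD ⊢
    field_simp
    ring
  simp only [Nat.add_sub_cancel]
  generalize (q - 2 + B) * x ^ (n + 1) + 1 = N
  generalize (q - 1) * x ^ (n + 1) + B = D at hD ⊢
  rw [div_pow, div_pow]
  subst hqB
  field_simp
  push_cast
  ring

lemma pottsHOfRoot_deriv_numerator_pos {d : ℕ} {q B x : ℝ} (hd : 2 ≤ d) (hq : 2 ≤ q)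
    (hB : 0 ≤ B) (hqB : ((d : ℝ) + 1) * (1 - B) = q) (hx : 1 < x) :
    0 < ((q - 1) * ((q - 2 + B) * x ^ d + 1) ^ d + B * ((q - 1) * x ^ d + B) ^ d)
          * ((q - 1) * x ^ d + B)
        - d * (q - 1 + B) ^ 2 * x ^ (d - 1) * ((q - 2 + B) * x ^ d + 1) ^ (d - 1)
          * ((q - 1) * (x - 1) + 1 - B) := by
  have hβ : 1 < x ^ d := one_lt_pow₀ hx (by omega)
  set β := x ^ d
  set N := (q - 2 + B) * β + 1
  set D := (q - 1) * β + B
  set C := (q - 1) * (x - 1) + 1 - B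
  set s := q - 1 + B
  have hds : d * (1 - B) = s := by linear_combination hqB
  have hB1 : 0 < 1 - B := by nlinarith
  have hN : 0 < N := by nlinarith
  have hs : 0 < s := by linarith
  have hD : 0 < D := by nlinarith
  have hCD : d * C ≤ D := by
    have := one_add_mul_sub_le_pow (by linarith : -1 ≤ x) d
    nlinarith
  have hxs : s * x ^ (d - 1) < N + B * (β - 1) := by
    have h := pow_pred_mul_lt_of_one_lt hx hd
    calc s * x ^ (d - 1) = (1 - B) * (d * x ^ (d - 1)) := by rw [← hds]; ring
      _ < (1 - B) * ((d - 1) * β + 1) := by gcongr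
      _ = N + B * (β - 1) := by linear_combination β * hqB
  have hND : N ^ d + d * N ^ (d - 1) * (D - N) ≤ D ^ d := by
    simpa using pow_add_mul_le_add_pow hN.le (b := D - N) (by nlinarith) d
  have hNd : N ^ d = N ^ (d - 1) * N := by rw [← pow_succ, Nat.sub_add_cancel (by omega)]
  rw [sub_pos]
  calc d * s ^ 2 * x ^ (d - 1) * N ^ (d - 1) * C
        = s ^ 2 * x ^ (d - 1) * N ^ (d - 1) * (d * C) := by ring
    _ ≤ s ^ 2 * x ^ (d - 1) * N ^ (d - 1) * D := by gcongr
    _ = s * N ^ (d - 1) * D * (s * x ^ (d - 1)) := by ring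
    _ < s * N ^ (d - 1) * D * (N + B * (β - 1)) := by gcongr
    _ = ((q - 1) * N ^ d + B * (N ^ d + d * N ^ (d - 1) * (D - N))) * D := by
      rw [hNd]; linear_combination (-B * N ^ (d - 1) * D * (β - 1)) * hds
    _ ≤ ((q - 1) * N ^ d + B * D ^ d) * D := by gcongr

lemma strictMonoOn_pottsHOfRoot {d : ℕ} {q B : ℝ} (hd : 2 ≤ d) (hq : 2 ≤ q) (hB : 0 ≤ B)
    (hqB : ((d : ℝ) + 1) * (1 - B) = q) :
    StrictMonoOn (pottsHOfRoot d q B) (Ici 1) := by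
  have hD : ∀ x ∈ Ici (1 : ℝ), 0 < (q - 1) * x ^ d + B := fun x hx => by
    have : (1 : ℝ) ≤ x ^ d := one_le_pow₀ hx
    nlinarith
  refine strictMonoOn_of_deriv_pos (convex_Ici 1) (fun x hx =>
    (hasDerivAt_pottsHOfRoot hqB (hD x hx).ne').continuousAt.continuousWithinAt) fun x hx => ?_
  rw [interior_Ici] at hx
  have hDx := hD x (mem_Ici.2 (le_of_lt hx))
  rw [(hasDerivAt_pottsHOfRoot hqB hDx.ne').deriv]
  exact div_pos (pottsHOfRoot_deriv_numerator_pos hd hq hB hqB hx) (pow_pos hDx _)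

/-- with B_c = (d+1−q)/(d+1), the function
h(β) = [1 − (1−B_c)(β−1)/((q−1)β + B_c)]^d · [(q−1)(β^{1/d} − 1) + 1 − B_c] + B_c·β^{1/d}
is strictly increasing on [1, ∞). -/
theorem potts_uniqueness_h_strict_mono
    (d q : ℕ) (hq : 2 ≤ q) (hdq : q ≤ d) :
    StrictMonoOn (fun β : ℝ =>
      (1 - (1 - ((d : ℝ) + 1 - (q : ℝ)) / ((d : ℝ) + 1)) * (β - 1)
          / (((q : ℝ) - 1) * β + ((d : ℝ) + 1 - (q : ℝ)) / ((d : ℝ) + 1))) ^ d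
        * (((q : ℝ) - 1) * (β ^ (1 / (d : ℝ)) - 1)
            + 1 - ((d : ℝ) + 1 - (q : ℝ)) / ((d : ℝ) + 1))
        + (((d : ℝ) + 1 - (q : ℝ)) / ((d : ℝ) + 1)) * β ^ (1 / (d : ℝ)))
      (Set.Ici 1) := by
  have hd : d ≠ 0 := by omega
  have hqd : (q : ℝ) ≤ d := by exact_mod_cast hdq
  set B : ℝ := ((d : ℝ) + 1 - q) / ((d : ℝ) + 1)
  have hB : 0 ≤ B := div_nonneg (by linarith) (by positivity)
  have hqB : ((d : ℝ) + 1) * (1 - B) = q := by simp only [B]; field_simp; ring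
  have hroot : StrictMonoOn (fun β : ℝ => β ^ (1 / (d : ℝ))) (Ici 1) :=
    (strictMonoOn_rpow_Ici_of_exponent_pos (by positivity)).mono (Ici_subset_Ici.2 zero_le_one)
  have hmaps : MapsTo (fun β : ℝ => β ^ (1 / (d : ℝ))) (Ici 1) (Ici 1) :=
    fun β hβ => one_le_rpow hβ (by positivity)
  refine ((strictMonoOn_pottsHOfRoot (by omega) (by exact_mod_cast hq) hB hqB).comp
    hroot hmaps).congr fun β hβ => ?_
  simp only [Function.comp, pottsHOfRoot, one_div, rpow_inv_natCast_pow (zero_le_one.trans hβ) hd]
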